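/- Asymptotics of the Lebesgue constants: let L_n = ∫ |D_n| dσ be the L¹(T)-norm of the n-th Dirichlet kernel. Then L_n = (4/π²) ln n + O(1); that is, there is a constant C such that |L_n − (4/π²) ln n| ≤ C for all n ≥ 1. -/

import Mathlib

/-!
Since `sin (x/2) * D_n x = sin ((n + 1/2) x)` and `D_n` is even,
`L_n = π⁻¹ ∫₀^π |sin ((n + 1/2) x)| / sin (x/2) dx`. Replacing `sin (x/2)` by `x/2` costs
`O(1)`, because `1 / sin t - 1 / t` is bounded on `(0, π/2]`, and the substitution
`u = (n + 1/2) x` turns what remains into `2 ∫₀^{(n+1/2)π} |sin u| / u du`. As `|sin|`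
integrates to `2` over any period, the integral over `[kπ, (k+1)π]` lies between `2 / ((k+1)π)`
and `2 / (kπ)`; summing over `k` compares the whole integral with `(2/π)` times a harmonic
number, i.e. with `(2/π) log n + O(1)`.
-/

open MeasureTheory Filter Real Set

/-- The Dirichlet kernel `D_n(x) = ∑_{k=-n}^{n} e^{ikx}`. -/
noncomputable def dirichletKernel (n : ℕ) (x : ℝ) : ℂ :=
  ∑ k ∈ Finset.Icc (-(n : ℤ)) (n : ℤ), Complex.exp (Complex.I * (k : ℂ) * (x : ℂ))

/-- The Lebesgue constant `L_n = ∫ |D_n| dσ = (1/(2π)) ∫_{-π}^{π} |D_n(x)| dx`. -/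
noncomputable def lebesgueConstant (n : ℕ) : ℝ :=
  (1 / (2 * π)) * ∫ x in (-π)..π, ‖dirichletKernel n x‖

theorem inv_sub_mul_sum_Icc_zpow_two_mul {K : Type*} [Field K] {w : K} (hw : w ≠ 0) (n : ℕ) :
    (w⁻¹ - w) * ∑ k ∈ Finset.Icc (-(n : ℤ)) n, w ^ (2 * k) =
      w ^ (-(2 * n + 1 : ℤ)) - w ^ (2 * n + 1 : ℤ) := by
  induction n with
  | zero => simp [zpow_neg]
  | succ n ih =>
    have hIcc : Finset.Icc (-((n + 1 : ℕ) : ℤ)) (n + 1 : ℕ)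
        = insert (-(n + 1 : ℤ)) (insert (n + 1 : ℤ) (Finset.Icc (-(n : ℤ)) n)) := by
      ext k; simp only [Finset.mem_Icc, Finset.mem_insert]; omega
    rw [hIcc, Finset.sum_insert (by simp; omega), Finset.sum_insert (by simp), mul_add, mul_add,
      ih]
    simp only [Nat.cast_add, Nat.cast_one, mul_add, neg_add, mul_neg, zpow_add₀ hw, zpow_neg,
      zpow_mul, zpow_natCast, zpow_one, mul_one]
    field_simp
    ring

theorem sin_half_mul_dirichletKernel (n : ℕ) (x : ℝ) :
    (Real.sin (x / 2) : ℂ) * dirichletKernel n x = Real.sin ((n + 1 / 2) * x) := by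
  set w := Complex.exp (Complex.I * x / 2)
  have hexp (m : ℤ) : Complex.exp (m * (Complex.I * x / 2)) = w ^ m := Complex.exp_int_mul _ m
  have hsin (m : ℤ) : Complex.sin (m * (x / 2)) = (w ^ (-m) - w ^ m) * Complex.I / 2 := by
    rw [Complex.sin, ← hexp, ← hexp]
    congr 4 <;> push_cast <;> ring
  have hD : dirichletKernel n x = ∑ k ∈ Finset.Icc (-(n : ℤ)) n, w ^ (2 * k) :=
    Finset.sum_congr rfl fun k _ => by rw [← hexp]; congr 1; push_cast; ring
  push_cast
  rw [show (n + 1 / 2 : ℂ) * x = ((2 * n + 1 : ℤ) : ℂ) * (x / 2) by push_cast; ring, hsin,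
    show (x / 2 : ℂ) = ((1 : ℤ) : ℂ) * (x / 2) by simp, hsin, hD, zpow_neg_one, zpow_one,
    ← inv_sub_mul_sum_Icc_zpow_two_mul (Complex.exp_ne_zero _) n]
  ring

theorem norm_dirichletKernel_eq {n : ℕ} {x : ℝ} (hx₀ : 0 < x) (hx : x < 2 * π) :
    ‖dirichletKernel n x‖ = |Real.sin ((n + 1 / 2) * x)| / Real.sin (x / 2) := by
  have hsin : 0 < Real.sin (x / 2) := sin_pos_of_pos_of_lt_pi (by linarith) (by linarith)
  have h := congrArg norm (sin_half_mul_dirichletKernel n x)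
  rw [norm_mul, Complex.norm_real, Complex.norm_real, Real.norm_of_nonneg hsin.le,
    Real.norm_eq_abs] at h
  rw [eq_div_iff hsin.ne', mul_comm, h]

theorem dirichletKernel_neg (n : ℕ) (x : ℝ) : dirichletKernel n (-x) = dirichletKernel n x := by
  refine Finset.sum_equiv (Equiv.neg ℤ)
    (fun k => by simp only [Finset.mem_Icc, Equiv.neg_apply]; omega) fun k _ => ?_
  simp only [Equiv.neg_apply]
  push_cast
  ring_nf

theorem continuous_dirichletKernel (n : ℕ) : Continuous (dirichletKernel n) := by
  unfold dirichletKernel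
  fun_prop

theorem lebesgueConstant_eq_integral (n : ℕ) :
    lebesgueConstant n = π⁻¹ * ∫ x in 0..π, |Real.sin ((n + 1 / 2) * x)| / Real.sin (x / 2) := by
  have hint : ∀ a b : ℝ, IntervalIntegrable (fun x => ‖dirichletKernel n x‖) volume a b :=
    fun a b => (continuous_dirichletKernel n).norm.intervalIntegrable a b
  have hneg : ∫ x in -π..0, ‖dirichletKernel n x‖ = ∫ x in 0..π, ‖dirichletKernel n x‖ := by
    simpa [dirichletKernel_neg] using
      (intervalIntegral.integral_comp_neg (a := 0) (b := π) fun x => ‖dirichletKernel n x‖).symm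
  have hpos : ∫ x in 0..π, ‖dirichletKernel n x‖ =
      ∫ x in 0..π, |Real.sin ((n + 1 / 2) * x)| / Real.sin (x / 2) := by
    refine intervalIntegral.integral_congr_ae (Eventually.of_forall fun x hx => ?_)
    rw [uIoc_of_le pi_pos.le] at hx
    exact norm_dirichletKernel_eq hx.1 (by linarith [hx.2, pi_pos])
  rw [lebesgueConstant, ← intervalIntegral.integral_add_adjacent_intervals (hint _ _) (hint _ _),
    hneg, hpos]
  field_simp
  ring

theorem intervalIntegrable_of_abs_le {f : ℝ → ℝ} {a b M : ℝ} (hf : Measurable f)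
    (hM : ∀ x ∈ uIoc a b, |f x| ≤ M) : IntervalIntegrable f volume a b :=
  (intervalIntegrable_const (c := M)).mono_fun' hf.aestronglyMeasurable
    ((ae_restrict_iff' measurableSet_uIoc).2 (Eventually.of_forall hM))

theorem abs_abs_sin_div_le_one (u : ℝ) : |(|Real.sin u| / u)| ≤ 1 := by
  rw [abs_div, abs_abs]
  exact div_le_one_of_le₀ (abs_sin_le_abs) (abs_nonneg u)

theorem intervalIntegrable_abs_sin_div (a b : ℝ) :
    IntervalIntegrable (fun u => |Real.sin u| / u) volume a b :=
  intervalIntegrable_of_abs_le (by fun_prop) fun u _ => abs_abs_sin_div_le_one u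

theorem abs_integral_abs_sin_div_le (a b : ℝ) : |∫ u in a..b, |Real.sin u| / u| ≤ |b - a| := by
  simpa using intervalIntegral.norm_integral_le_of_norm_le_const
    (f := fun u => |Real.sin u| / u) (a := a) (b := b) fun u _ => abs_abs_sin_div_le_one u

theorem integral_abs_sin_add_pi (a : ℝ) : ∫ u in a..a + π, |Real.sin u| = 2 := by
  have hper : Function.Periodic (fun u => |Real.sin u|) π := fun u => by simp [sin_add_pi]
  rw [hper.intervalIntegral_add_eq a 0, zero_add,
    intervalIntegral.integral_congr fun u hu => abs_of_nonneg (sin_nonneg_of_mem_Icc <| by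
      rwa [uIcc_of_le pi_pos.le] at hu), integral_sin]
  norm_num

theorem two_div_add_pi_le_integral_abs_sin_div {a : ℝ} (ha : 0 < a) :
    2 / (a + π) ≤ ∫ u in a..a + π, |Real.sin u| / u := by
  have hle : a ≤ a + π := by linarith [pi_pos]
  calc 2 / (a + π) = ∫ u in a..a + π, |Real.sin u| / (a + π) := by
        rw [intervalIntegral.integral_div, integral_abs_sin_add_pi]
    _ ≤ ∫ u in a..a + π, |Real.sin u| / u :=
        intervalIntegral.integral_mono_on hle
          ((by fun_prop : Continuous _).intervalIntegrable _ _) (intervalIntegrable_abs_sin_div _ _)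
          fun u hu => div_le_div_of_nonneg_left (abs_nonneg _) (ha.trans_le hu.1) hu.2

theorem integral_abs_sin_div_le_two_div {a : ℝ} (ha : 0 < a) :
    ∫ u in a..a + π, |Real.sin u| / u ≤ 2 / a := by
  have hle : a ≤ a + π := by linarith [pi_pos]
  calc ∫ u in a..a + π, |Real.sin u| / u ≤ ∫ u in a..a + π, |Real.sin u| / a :=
        intervalIntegral.integral_mono_on hle (intervalIntegrable_abs_sin_div _ _)
          ((by fun_prop : Continuous _).intervalIntegrable _ _)
          fun u hu => div_le_div_of_nonneg_left (abs_nonneg _) ha hu.1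
    _ = 2 / a := by rw [intervalIntegral.integral_div, integral_abs_sin_add_pi]

theorem two_div_pi_mul_harmonic (n : ℕ) :
    2 / π * (harmonic n : ℝ) = ∑ k ∈ Finset.range n, 2 / ((k + 1) * π) := by
  simp only [harmonic, Rat.cast_sum, Rat.cast_inv, Rat.cast_natCast, Finset.mul_sum]
  refine Finset.sum_congr rfl fun k _ => ?_
  push_cast
  field_simp

theorem integral_abs_sin_div_between_harmonic (n : ℕ) :
    2 / π * (harmonic (n + 1) - 1) ≤ ∫ u in π..(n + 1) * π, |Real.sin u| / u ∧
      ∫ u in π..(n + 1) * π, |Real.sin u| / u ≤ 2 / π * harmonic n := by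
  have hsum : ∫ u in π..(n + 1) * π, |Real.sin u| / u =
      ∑ k ∈ Finset.range n, ∫ u in (k + 1) * π..(k + 1) * π + π, |Real.sin u| / u := by
    have h := intervalIntegral.sum_integral_adjacent_intervals (a := fun k : ℕ => (k + 1) * π)
      (n := n) (μ := volume) fun k _ => intervalIntegrable_abs_sin_div _ _
    simp only [Nat.cast_zero, zero_add, one_mul, Nat.cast_add, Nat.cast_one] at h
    rw [← h]
    exact Finset.sum_congr rfl fun k _ => by ring_nf
  rw [hsum]
  constructor
  · calc 2 / π * (harmonic (n + 1) - 1) = ∑ k ∈ Finset.range n, 2 / ((k + 1) * π + π) := by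
          rw [mul_sub, two_div_pi_mul_harmonic, Finset.sum_range_succ', Nat.cast_zero, zero_add,
            one_mul, mul_one, add_sub_cancel_right]
          refine Finset.sum_congr rfl fun k _ => ?_
          push_cast
          ring
      _ ≤ _ := Finset.sum_le_sum fun k _ => two_div_add_pi_le_integral_abs_sin_div (by positivity)
  · calc _ ≤ ∑ k ∈ Finset.range n, 2 / ((k + 1) * π) :=
          Finset.sum_le_sum fun k _ => integral_abs_sin_div_le_two_div (by positivity)
      _ = _ := (two_div_pi_mul_harmonic n).symm

theorem abs_integral_abs_sin_div_sub_log_le (n : ℕ) :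
    |(∫ u in π..(n + 1) * π, |Real.sin u| / u) - 2 / π * Real.log n| ≤ 2 / π := by
  obtain ⟨hlow, hup⟩ := integral_abs_sin_div_between_harmonic n
  have hlog : Real.log n ≤ harmonic (n + 1) := by
    refine le_trans ?_ (log_add_one_le_harmonic (n + 1))
    rcases n.eq_zero_or_pos with rfl | hn
    · simp [Real.log_nonneg]
    · exact Real.log_le_log (by positivity) (by push_cast; linarith)
  have hπ : 0 < 2 / π := by positivity
  rw [abs_sub_le_iff]
  constructor <;> nlinarith [harmonic_le_one_add_log n]

theorem abs_integral_zero_abs_sin_div_sub_log_le (n : ℕ) :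
    |(∫ u in 0..(n + 1 / 2) * π, |Real.sin u| / u) - 2 / π * Real.log n| ≤
      3 * π / 2 + 2 / π := by
  have hsplit : ∫ u in 0..(n + 1 / 2) * π, |Real.sin u| / u =
      (∫ u in 0..π, |Real.sin u| / u) + (∫ u in π..(n + 1) * π, |Real.sin u| / u) +
        ∫ u in (n + 1) * π..(n + 1 / 2) * π, |Real.sin u| / u := by
    rw [intervalIntegral.integral_add_adjacent_intervals (intervalIntegrable_abs_sin_div _ _)
        (intervalIntegrable_abs_sin_div _ _),
      intervalIntegral.integral_add_adjacent_intervals (intervalIntegrable_abs_sin_div _ _)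
        (intervalIntegrable_abs_sin_div _ _)]
  have hhead := abs_integral_abs_sin_div_le 0 π
  have htail := abs_integral_abs_sin_div_le ((n + 1) * π) ((n + 1 / 2) * π)
  have hmid := abs_integral_abs_sin_div_sub_log_le n
  rw [sub_zero, abs_of_pos pi_pos] at hhead
  rw [show (n + 1 / 2) * π - (n + 1) * π = -(π / 2) by ring, abs_neg,
    abs_of_pos (half_pos pi_pos)] at htail
  rw [hsplit]
  calc _ = |(∫ u in 0..π, |Real.sin u| / u) +
        ((∫ u in π..(n + 1) * π, |Real.sin u| / u) - 2 / π * Real.log n) +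
          ∫ u in (n + 1) * π..(n + 1 / 2) * π, |Real.sin u| / u| := by ring_nf
    _ ≤ π + 2 / π + π / 2 := (abs_add_three _ _ _).trans (by gcongr)
    _ = 3 * π / 2 + 2 / π := by ring

theorem inv_sin_sub_inv_le_one {t : ℝ} (ht₀ : 0 < t) (ht : t ≤ π / 2) :
    (Real.sin t)⁻¹ - t⁻¹ ≤ 1 := by
  have hsin : 2 / π * t ≤ Real.sin t := mul_le_sin ht₀.le ht
  have hcube := sin_ge_sub_cube ht₀.le
  have hsin₀ : 0 < Real.sin t := lt_of_lt_of_le (by positivity) hsin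
  -- `t - sin t ≤ t³/6 ≤ t sin t`, the last step by Jordan's `2t/π ≤ sin t` since `tπ ≤ 12`
  have ht12 : t * π ≤ 12 := by nlinarith [pi_le_four, pi_pos]
  have hmain : t - Real.sin t ≤ Real.sin t * t := by
    have : t ^ 2 / 6 ≤ 2 / π * t := by
      rw [div_mul_eq_mul_div, le_div_iff₀ pi_pos]; nlinarith
    nlinarith
  rw [inv_sub_inv hsin₀.ne' ht₀.ne', div_le_one (by positivity)]
  exact hmain

theorem abs_integral_abs_sin_mul_div_sin_half_sub_le {N : ℝ} (hN : 0 < N) :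
    |(∫ x in 0..π, |Real.sin (N * x)| / Real.sin (x / 2)) -
        2 * ∫ u in 0..N * π, |Real.sin u| / u| ≤ π := by
  set g : ℝ → ℝ := fun x => |Real.sin (N * x)| / (x / 2)
  set h : ℝ → ℝ := fun x => |Real.sin (N * x)| * ((Real.sin (x / 2))⁻¹ - (x / 2)⁻¹)
  have hgap : ∀ x ∈ uIoc 0 π, |h x| ≤ 1 := by
    intro x hx
    rw [uIoc_of_le pi_pos.le] at hx
    obtain ⟨hx₀, hxπ⟩ := hx
    have hx2 : 0 < x / 2 := half_pos hx₀
    have hnonneg : 0 ≤ (Real.sin (x / 2))⁻¹ - (x / 2)⁻¹ :=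
      sub_nonneg.2 (inv_anti₀ (sin_pos_of_pos_of_lt_pi hx2 (by linarith [pi_pos]))
        (sin_lt hx2).le)
    rw [abs_mul, abs_abs, abs_of_nonneg hnonneg]
    exact mul_le_one₀ (abs_sin_le_one _) hnonneg (inv_sin_sub_inv_le_one hx2 (by linarith))
  have hg : IntervalIntegrable g volume 0 π := by
    refine intervalIntegrable_of_abs_le (M := 2 * N) (by fun_prop) fun x hx => ?_
    rw [uIoc_of_le pi_pos.le] at hx
    rw [abs_div, abs_abs, abs_of_pos (half_pos hx.1), div_le_iff₀ (half_pos hx.1)]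
    calc |Real.sin (N * x)| ≤ |N * x| := abs_sin_le_abs
      _ = 2 * N * (x / 2) := by rw [abs_of_pos (by nlinarith [hx.1])]; ring
  have hh : IntervalIntegrable h volume 0 π := intervalIntegrable_of_abs_le (by fun_prop) hgap
  have hsubst : ∫ x in 0..π, g x = 2 * ∫ u in 0..N * π, |Real.sin u| / u := by
    have hg_eq : g = fun x => 2 * N * (|Real.sin (N * x)| / (N * x)) := by
      ext x
      rcases eq_or_ne x 0 with rfl | hx
      · simp [g]
      · simp only [g]; field_simp
    rw [hg_eq, intervalIntegral.integral_const_mul,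
      intervalIntegral.integral_comp_mul_left (fun u => |Real.sin u| / u) hN.ne', mul_zero,
      smul_eq_mul]
    field_simp
  have hsplit : ∫ x in 0..π, |Real.sin (N * x)| / Real.sin (x / 2) =
      (∫ x in 0..π, g x) + ∫ x in 0..π, h x := by
    rw [← intervalIntegral.integral_add hg hh]
    congr 1 with x
    simp only [g, h]
    ring
  rw [hsplit, ← hsubst, add_sub_cancel_left]
  simpa [abs_of_pos pi_pos] using intervalIntegral.norm_integral_le_of_norm_le_const
    (f := h) (C := 1) hgap

/-- Asymptotics of the Lebesgue constants: `L_n = (4/π²) ln n + O(1)`. -/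
theorem lebesgueConstant_asymptotics :
    ∃ C : ℝ, ∀ n : ℕ, 1 ≤ n →
      |lebesgueConstant n - (4 / π ^ 2) * Real.log n| ≤ C := by
  refine ⟨1 + 2 / π * (3 * π / 2 + 2 / π), fun n _ => ?_⟩
  have hN : (0 : ℝ) < n + 1 / 2 := by positivity
  have hI := abs_integral_abs_sin_mul_div_sin_half_sub_le hN
  have hJ := abs_integral_zero_abs_sin_div_sub_log_le n
  have hL := lebesgueConstant_eq_integral n
  set I := ∫ x in 0..π, |Real.sin ((n + 1 / 2) * x)| / Real.sin (x / 2)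
  set J := ∫ u in 0..(n + 1 / 2) * π, |Real.sin u| / u
  have hπ := pi_pos
  calc |lebesgueConstant n - 4 / π ^ 2 * Real.log n|
      = |π⁻¹ * (I - 2 * J) + 2 / π * (J - 2 / π * Real.log n)| := by
        rw [hL]
        congr 1
        field_simp
        ring
    _ ≤ π⁻¹ * π + 2 / π * (3 * π / 2 + 2 / π) := by
        refine (abs_add_le _ _).trans ?_
        rw [abs_mul, abs_mul, abs_of_pos (inv_pos.2 hπ), abs_of_pos (by positivity : 0 < 2 / π)]
        gcongr
    _ = 1 + 2 / π * (3 * π / 2 + 2 / π) := by rw [inv_mul_cancel₀ hπ.ne']
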